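/- arXiv:2309.00557 — 6 statements merged into one kernel-verified Lean document; each statement's English description precedes it below -/
import Mathlib

section
/- For any bandit policy π and any ε ≥ 0, the Table mechanism M^π satisfies ε-DP (i.e. (ε,0)-DP) if and only if the View mechanism V^π satisfies ε-DP. -/
/-!
Statement 0: For any bandit policy π and any ε ≥ 0, the Table mechanism M^π
satisfies ε-DP (i.e. (ε,0)-DP) if and only if the View mechanism V^π satisfies ε-DP.
-/

open scoped BigOperators

/-- A bandit policy for `K` arms: at step `t` (0-indexed), given the history of
(action, reward) pairs, it returns a probability vector over the `K` arms. -/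
abbrev BPolicy (K : ℕ) := ℕ → List (Fin K × ℝ) → Fin K → ℝ

/-- The condition that a policy is an actual sequence of probability kernels. -/
def IsBPolicy {K : ℕ} (π : BPolicy K) : Prop :=
  ∀ t h, (∀ a, 0 ≤ π t h a) ∧ ∑ a, π t h a = 1

/-- Auxiliary coercion of an index `s < t` into `Fin T` (for `t : Fin T`). -/
def Fin.embed {T : ℕ} (t : Fin T) (s : Fin t.val) : Fin T := ⟨s.val, s.isLt.trans t.isLt⟩

/-- The history `(a_1, r_1, …, a_{t-1}, r_{t-1})` built from a sequence of actions `a`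
and a sequence of rewards `r`, as seen just before step `t`. -/
def histOf {K T : ℕ} (a : Fin T → Fin K) (r : Fin T → ℝ) (t : Fin T) : List (Fin K × ℝ) :=
  List.ofFn fun s : Fin t.val => (a (t.embed s), r (t.embed s))

/-- The View mechanism `V^π`: probability that the policy `π`, fed the fixed list of
rewards `r`, produces the sequence of actions `a`:
`V^π_r(a_1,…,a_T) = ∏_t π_t(a_t | a_1, r_1, …, a_{t-1}, r_{t-1})`. -/
noncomputable def viewProb {K T : ℕ} (π : BPolicy K) (r : Fin T → ℝ) (a : Fin T → Fin K) : ℝ :=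
  ∏ t : Fin T, π t.val (histOf a r t) (a t)

/-- The Table mechanism `M^π`: probability that the policy `π`, interacting with the
table of (potential) rewards `d`, produces the sequence of actions `a`:
`M^π_d(a_1,…,a_T) = ∏_t π_t(a_t | a_1, x_{1,a_1}, …, a_{t-1}, x_{t-1,a_{t-1}})`. -/
noncomputable def tableProb {K T : ℕ} (π : BPolicy K) (d : Fin T → Fin K → ℝ)
    (a : Fin T → Fin K) : ℝ :=
  viewProb π (fun s => d s (a s)) a

/-- Two inputs (tables or lists, viewed as functions) are neighbouring when they differ
in exactly one coordinate. -/
def Adjacent {T : ℕ} {α : Type*} (x y : Fin T → α) : Prop :=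
  ∃ j, x j ≠ y j ∧ ∀ i, i ≠ j → x i = y i

/-- `(ε,δ)`-differential privacy for a mechanism `M` with finite output space, with
respect to a neighbouring relation `Neigh`: for all neighbouring inputs and all events
`E`, `M_d(E) ≤ e^ε · M_{d'}(E) + δ`. -/
def IsDP {I Ω : Type*} [Fintype Ω] (M : I → Ω → ℝ) (Neigh : I → I → Prop)
    (ε δ : ℝ) : Prop :=
  ∀ d d', Neigh d d' → ∀ E : Finset Ω,
    ∑ a ∈ E, M d a ≤ Real.exp ε * ∑ a ∈ E, M d' a + δ


theorem isDP_zero_iff_forall_le {I Ω : Type*} [Fintype Ω] (M : I → Ω → ℝ)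
    (Neigh : I → I → Prop) (ε : ℝ) :
    IsDP M Neigh ε 0 ↔ ∀ d d', Neigh d d' → ∀ a, M d a ≤ Real.exp ε * M d' a := by
  constructor
  · intro h d d' hd a
    simpa using h d d' hd {a}
  · intro h d d' hd E
    rw [add_zero, Finset.mul_sum]
    exact Finset.sum_le_sum fun a _ => h d d' hd a

namespace Adjacent

variable {T : ℕ} {α β : Type*} {x y : Fin T → α}

theorem const_rows [Nonempty β] (h : Adjacent x y) :
    Adjacent (fun s (_ : β) => x s) (fun s _ => y s) := by
  obtain ⟨j, hj, hfix⟩ := h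
  exact ⟨j, fun hxy => hj (congrFun hxy (Classical.arbitrary β)),
    fun i hi => funext fun _ => hfix i hi⟩

theorem map (h : Adjacent x y) (g : Fin T → α → β) :
    (fun s => g s (x s)) = (fun s => g s (y s)) ∨
      Adjacent (fun s => g s (x s)) (fun s => g s (y s)) := by
  obtain ⟨j, -, hfix⟩ := h
  by_cases hj : g j (x j) = g j (y j)
  · left
    funext s
    by_cases hs : s = j
    · rw [hs, hj]
    · rw [hfix s hs]
  · exact Or.inr ⟨j, hj, fun i hi => congrArg (g i) (hfix i hi)⟩

end Adjacent

theorem viewProb_nonneg {K T : ℕ} {π : BPolicy K} (hπ : IsBPolicy π)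
    (r : Fin T → ℝ) (a : Fin T → Fin K) : 0 ≤ viewProb π r a :=
  Finset.prod_nonneg fun t _ => (hπ t.val (histOf a r t)).1 (a t)

theorem table_dp_iff_view_dp {K T : ℕ} (π : BPolicy K) (hπ : IsBPolicy π)
    (ε : ℝ) (hε : 0 ≤ ε) :
    IsDP (fun d : Fin T → Fin K → ℝ => tableProb π d) Adjacent ε 0 ↔
      IsDP (fun r : Fin T → ℝ => viewProb π r) Adjacent ε 0 := by
  rw [isDP_zero_iff_forall_le, isDP_zero_iff_forall_le]
  constructor
  · intro hTable r r' hr a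
    obtain ⟨j, -⟩ := id hr
    have : Nonempty (Fin K) := ⟨a j⟩
    exact hTable _ _ hr.const_rows a
  · intro hView d d' hd a
    rcases hd.map (fun s row => row (a s)) with hsame | hadj
    · have hprob : tableProb π d a = tableProb π d' a := by rw [tableProb, hsame]; rfl
      rw [hprob]
      exact le_mul_of_one_le_left (viewProb_nonneg hπ _ a) (Real.one_le_exp hε)
    · exact hView _ _ hadj a
end

section
/- For any bandit policy π, if the Table mechanism M^π satisfies (ε,δ)-DP, then the View mechanism V^π satisfies (ε,δ)-DP. -/
open scoped BigOperators

theorem IsBPolicy.nonempty_arms {K : ℕ} {π : BPolicy K} (hπ : IsBPolicy π) :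
    Nonempty (Fin K) := by
  by_contra hK
  have hsum := (hπ 0 []).2
  rw [Finset.univ_eq_empty_iff.mpr (not_nonempty_iff.mp hK), Finset.sum_empty] at hsum
  exact zero_ne_one hsum

theorem Adjacent.comp_injective {T : ℕ} {α β : Type*} {x y : Fin T → α} (h : Adjacent x y)
    {f : α → β} (hf : Function.Injective f) : Adjacent (f ∘ x) (f ∘ y) :=
  let ⟨j, hj, hrest⟩ := h
  ⟨j, hf.ne hj, fun i hi => congrArg f (hrest i hi)⟩

theorem IsDP.comp {I J Ω : Type*} [Fintype Ω] {M : I → Ω → ℝ} {Neigh : I → I → Prop}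
    {ε δ : ℝ} (hM : IsDP M Neigh ε δ) {NeighJ : J → J → Prop} (g : J → I)
    (hg : ∀ x y, NeighJ x y → Neigh (g x) (g y)) : IsDP (M ∘ g) NeighJ ε δ :=
  fun x y hxy => hM (g x) (g y) (hg x y hxy)

theorem view_dp_of_table_dp {K T : ℕ} (π : BPolicy K) (hπ : IsBPolicy π) (ε δ : ℝ)
    (htable : IsDP (fun d : Fin T → Fin K → ℝ => tableProb π d) Adjacent ε δ) :
    IsDP (fun r : Fin T → ℝ => viewProb π r) Adjacent ε δ :=
  have := hπ.nonempty_arms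
  -- A reward list is the table whose row `t` gives every arm the reward `r t`, and on such
  -- tables the Table mechanism is, by unfolding, the View mechanism.
  htable.comp (fun r => Function.const (Fin K) ∘ r)
    fun _ _ h => h.comp_injective Function.const_injective
end

section
/- For any bandit policy π, if the Table mechanism M^π satisfies ρ-zCDP, then the View mechanism V^π satisfies ρ-zCDP. -/
open scoped BigOperators

/-- The Rényi divergence of order `α` between two distributions `p` and `q`
on a finite space: `D_α(p‖q) = (α-1)⁻¹ · log (∑ x, p(x)^α · q(x)^{1-α})`. -/
noncomputable def renyiDiv {Ω : Type*} [Fintype Ω] (α : ℝ) (p q : Ω → ℝ) : ℝ :=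
  (α - 1)⁻¹ * Real.log (∑ x, p x ^ α * q x ^ (1 - α))

/-- `ρ`-zero-concentrated differential privacy for a mechanism `M` with finite output
space, with respect to a neighbouring relation `Neigh`: for all `α > 1` and all
neighbouring inputs, `D_α(M_d ‖ M_{d'}) ≤ ρα`. -/
def IsZCDP {I Ω : Type*} [Fintype Ω] (M : I → Ω → ℝ) (Neigh : I → I → Prop)
    (ρ : ℝ) : Prop :=
  ∀ α : ℝ, 1 < α → ∀ d d', Neigh d d' → renyiDiv α (M d) (M d') ≤ ρ * α

/-!
A list of rewards `r` is the same thing as the table whose row `s` is constantly `r s`, and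
on such a table the Table mechanism reads exactly the rewards the View mechanism is fed.
Neighbouring lists give neighbouring constant-row tables (as soon as there is an arm), so the
zCDP guarantee of `M^π` restricts to `V^π`.
-/

theorem IsZCDP.comp {I J Ω : Type*} [Fintype Ω] {M : I → Ω → ℝ} {Neigh : I → I → Prop}
    {ρ : ℝ} (hM : IsZCDP M Neigh ρ) {Neigh' : J → J → Prop} (f : J → I)
    (hf : ∀ x y, Neigh' x y → Neigh (f x) (f y)) :
    IsZCDP (fun x => M (f x)) Neigh' ρ :=
  fun α hα x y hxy => hM α hα (f x) (f y) (hf x y hxy)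

theorem Adjacent.constRows {T : ℕ} {α β : Type*} [Nonempty β] {x y : Fin T → α}
    (h : Adjacent x y) : Adjacent (fun s (_ : β) => x s) (fun s (_ : β) => y s) := by
  obtain ⟨j, hj, hothers⟩ := h
  refine ⟨j, fun hrow => hj (congrFun hrow (Classical.arbitrary β)), fun i hi => ?_⟩
  simp only [hothers i hi]

theorem view_zcdp_of_table_zcdp {K T : ℕ} (π : BPolicy K) (hπ : IsBPolicy π) (ρ : ℝ)
    (htable : IsZCDP (fun d : Fin T → Fin K → ℝ => tableProb π d) Adjacent ρ) :
    IsZCDP (fun r : Fin T → ℝ => viewProb π r) Adjacent ρ := by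
  have := hπ.nonempty_arms
  exact htable.comp (Neigh' := Adjacent) (fun (r : Fin T → ℝ) s (_ : Fin K) => r s)
    fun _ _ hadj => hadj.constRows
end

section
/- There exist ε ≥ 0, δ ∈ (0,1) and a bandit policy π (one can take horizon T = 3, K = 2 arms, ε = 0.95, δ = 0.17) such that the View mechanism V^π satisfies (ε,δ)-DP but the Table mechanism M^π does not satisfy (ε,δ)-DP; hence the class of policies satisfying (ε,δ)-Table DP is strictly contained in the class of policies satisfying (ε,δ)-View DP. -/
open scoped BigOperators

/-!
Let the policy play uniformly at random, except at the second step, where it plays arm 1 with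
probability `armOneProb a₁ r₁`, a function of the first action and reward. For every reward `r`
exactly one of `armOneProb 0 r`, `armOneProb 1 r` differs from `1/2`, and by `3/20`; hence
changing the one observed reward `r₁` moves these two probabilities by at most `3/10` in total,
and the View mechanism by at most `3/20` in total variation. A neighbouring table may change the
rewards of both arms at once: the first rows `(1/2, 5/2)` and `(-1, 3/2)` send both probabilities
to `13/20` and to `7/20` respectively, so the event "arm 1 at the second step" moves by
`3/10 > 17/100`. Conversely, Table DP always implies View DP, since a list of rewards is a table
with constant rows.
-/

open Finset

lemma Adjacent.comp {T : ℕ} {α β : Type*} {x y : Fin T → α} {f : α → β}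
    (hf : Function.Injective f) (h : Adjacent x y) : Adjacent (f ∘ x) (f ∘ y) := by
  obtain ⟨j, hj, hx⟩ := h
  exact ⟨j, hf.ne hj, fun i hi => congrArg f (hx i hi)⟩

lemma adjacent_update {T : ℕ} {α : Type*} (x : Fin T → α) (j : Fin T) {u v : α}
    (huv : u ≠ v) :
    Adjacent (Function.update x j u) (Function.update x j v) :=
  ⟨j, by simpa using huv, fun i hi => by simp [hi]⟩

theorem IsDP.viewProb_of_tableProb {K T : ℕ} [NeZero K] {π : BPolicy K} {ε δ : ℝ}
    (h : IsDP (fun d : Fin T → Fin K → ℝ => tableProb π d) Adjacent ε δ) :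
    IsDP (fun r : Fin T → ℝ => viewProb π r) Adjacent ε δ := fun r r' hr =>
  h (Function.const _ ∘ r) (Function.const _ ∘ r') (hr.comp Function.const_injective)

theorem isDP_zero_of_sum_posPart_sub_le {I Ω : Type*} [Fintype Ω] {M : I → Ω → ℝ}
    {Neigh : I → I → Prop} {δ : ℝ}
    (h : ∀ d d', Neigh d d' → ∑ a, (M d a - M d' a)⁺ ≤ δ) : IsDP M Neigh 0 δ := by
  intro d d' hd E
  have hE : ∑ a ∈ E, (M d a - M d' a) ≤ ∑ a, (M d a - M d' a)⁺ :=
    (sum_le_sum fun a _ => le_posPart _).trans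
      (sum_le_sum_of_subset_of_nonneg (subset_univ E) fun a _ _ => posPart_nonneg _)
  rw [sum_sub_distrib] at hE
  rw [Real.exp_zero, one_mul]
  linarith [h d d' hd]

lemma sum_fin_succ_succ_apply_zero_one {α M : Type*} [Fintype α] [AddCommMonoid M] (n : ℕ)
    (g : α → α → M) :
    ∑ a : Fin (n + 2) → α, g (a 0) (a 1) =
      Fintype.card (Fin n → α) • ∑ x, ∑ y, g x y := by
  simp only [← (Fin.consEquiv fun _ => α).sum_comp, Fintype.sum_prod_type, Fin.consEquiv_apply,
    Fin.cons_zero, Fin.cons_one, sum_const, card_univ, smul_sum]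

def bernArm (q : ℝ) : Fin 2 → ℝ := ![1 - q, q]

lemma sum_bernArm (q : ℝ) : ∑ a, bernArm q a = 1 := by simp [bernArm, Fin.sum_univ_two]

lemma bernArm_nonneg {q : ℝ} (hq : q ∈ Set.Icc 0 1) (a : Fin 2) : 0 ≤ bernArm q a := by
  fin_cases a <;> simp [bernArm, hq.1, hq.2]

lemma bernArm_half (a : Fin 2) : bernArm (1 / 2) a = 1 / 2 := by
  fin_cases a <;> norm_num [bernArm]

lemma sum_posPart_bernArm_sub (q q' : ℝ) : ∑ a, (bernArm q a - bernArm q' a)⁺ = |q - q'| := by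
  rw [Fin.sum_univ_two, ← posPart_add_negPart, ← posPart_neg, add_comm]
  simp [bernArm]

noncomputable def secondStepPolicy (q : Fin 2 → ℝ → ℝ) : BPolicy 2
  | 1, (a₀, r₀) :: _ => bernArm (q a₀ r₀)
  | _, _ => bernArm (1 / 2)

lemma isBPolicy_secondStepPolicy {q : Fin 2 → ℝ → ℝ} (hq : ∀ k r, q k r ∈ Set.Icc 0 1) :
    IsBPolicy (secondStepPolicy q) := by
  intro t h
  obtain ⟨p, hp, hpq⟩ : ∃ p ∈ Set.Icc (0 : ℝ) 1, secondStepPolicy q t h = bernArm p := by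
    unfold secondStepPolicy
    split
    · exact ⟨_, hq _ _, rfl⟩
    · exact ⟨1 / 2, by norm_num, rfl⟩
  rw [hpq]
  exact ⟨bernArm_nonneg hp, sum_bernArm p⟩

lemma viewProb_secondStepPolicy (q : Fin 2 → ℝ → ℝ) (r : Fin 3 → ℝ)
    (a : Fin 3 → Fin 2) :
    viewProb (secondStepPolicy q) r a = bernArm (q (a 0) (r 0)) (a 1) / 4 := by
  rw [viewProb, Fin.prod_univ_three]
  change bernArm (1 / 2) (a 0) * bernArm (q (a 0) (r 0)) (a 1) * bernArm (1 / 2) (a 2) = _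
  rw [bernArm_half, bernArm_half]
  ring

lemma sum_posPart_viewProb_secondStepPolicy_sub (q : Fin 2 → ℝ → ℝ) (r r' : Fin 3 → ℝ) :
    ∑ a, (viewProb (secondStepPolicy q) r a - viewProb (secondStepPolicy q) r' a)⁺ =
      (|q 0 (r 0) - q 0 (r' 0)| + |q 1 (r 0) - q 1 (r' 0)|) / 2 := by
  have hdiv (u w : ℝ) : (u / 4 - w / 4)⁺ = (u - w)⁺ / 4 := by
    rw [← sub_div, posPart_def, posPart_def, ← max_div_div_right (by norm_num), zero_div]
  simp only [viewProb_secondStepPolicy, hdiv]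
  rw [sum_fin_succ_succ_apply_zero_one 1
    fun x y => (bernArm (q x (r 0)) y - bernArm (q x (r' 0)) y)⁺ / 4]
  simp only [← sum_div, sum_posPart_bernArm_sub]
  simp only [Fin.sum_univ_two, Fintype.card_fun, Fintype.card_fin]
  ring

lemma sum_tableProb_secondStepPolicy_filter_armOne (q : Fin 2 → ℝ → ℝ)
    (d : Fin 3 → Fin 2 → ℝ) :
    ∑ a ∈ univ.filter (fun a : Fin 3 → Fin 2 => a 1 = 1), tableProb (secondStepPolicy q) d a =
      (q 0 (d 0 0) + q 1 (d 0 1)) / 2 := by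
  simp only [sum_filter, tableProb, viewProb_secondStepPolicy]
  rw [sum_fin_succ_succ_apply_zero_one 1
    fun x y => if y = 1 then bernArm (q x (d 0 x)) y / 4 else 0]
  simp only [sum_ite_eq', mem_univ, ↓reduceIte, Fin.sum_univ_two, Fintype.card_fun,
    Fintype.card_fin, bernArm, Matrix.cons_val_one, Matrix.cons_val_fin_one, nsmul_eq_mul]
  push_cast
  ring

noncomputable def armOneProb : Fin 2 → ℝ → ℝ :=
  ![fun r => if r < 0 then 7 / 20 else if r < 1 then 13 / 20 else 1 / 2,
    fun r => if r < 1 then 1 / 2 else if r < 2 then 7 / 20 else 13 / 20]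

lemma abs_armOneProb_sub_half_add (r : ℝ) :
    |armOneProb 0 r - 1 / 2| + |armOneProb 1 r - 1 / 2| = 3 / 20 := by
  simp only [armOneProb, Matrix.cons_val_zero, Matrix.cons_val_one]
  split_ifs <;> norm_num <;> linarith

lemma abs_armOneProb_sub_half_le (k : Fin 2) (r : ℝ) : |armOneProb k r - 1 / 2| ≤ 3 / 20 := by
  have h := abs_armOneProb_sub_half_add r
  have h₀ := abs_nonneg (armOneProb 0 r - 1 / 2)
  have h₁ := abs_nonneg (armOneProb 1 r - 1 / 2)
  match k with
  | 0 => linarith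
  | 1 => linarith

lemma armOneProb_mem_Icc (k : Fin 2) (r : ℝ) : armOneProb k r ∈ Set.Icc 0 1 := by
  have := abs_le.1 (abs_armOneProb_sub_half_le k r)
  constructor <;> linarith

lemma abs_armOneProb_sub_add_le (v v' : ℝ) :
    |armOneProb 0 v - armOneProb 0 v'| + |armOneProb 1 v - armOneProb 1 v'| ≤ 3 / 10 := by
  have h₀ := abs_sub_le (armOneProb 0 v) (1 / 2) (armOneProb 0 v')
  have h₁ := abs_sub_le (armOneProb 1 v) (1 / 2) (armOneProb 1 v')
  rw [abs_sub_comm (1 / 2)] at h₀ h₁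
  linarith [abs_armOneProb_sub_half_add v, abs_armOneProb_sub_half_add v']

theorem isDP_viewProb_secondStepPolicy_armOneProb :
    IsDP (fun r : Fin 3 → ℝ => viewProb (secondStepPolicy armOneProb) r) Adjacent 0
      (17 / 100) :=
  isDP_zero_of_sum_posPart_sub_le fun r r' _ => by
    rw [sum_posPart_viewProb_secondStepPolicy_sub]
    linarith [abs_armOneProb_sub_add_le (r 0) (r' 0)]

theorem not_isDP_tableProb_secondStepPolicy_armOneProb :
    ¬ IsDP (fun d : Fin 3 → Fin 2 → ℝ => tableProb (secondStepPolicy armOneProb) d)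
      Adjacent 0 (17 / 100) := by
  intro h
  have := h (Function.update 0 0 ![1 / 2, 5 / 2]) (Function.update 0 0 ![-1, 3 / 2])
    (adjacent_update _ _ (by simp)) (univ.filter fun a => a 1 = 1)
  rw [sum_tableProb_secondStepPolicy_filter_armOne,
    sum_tableProb_secondStepPolicy_filter_armOne] at this
  norm_num [armOneProb] at this

theorem table_dp_strictly_stronger_than_view_dp :
    ∃ (ε δ : ℝ), 0 ≤ ε ∧ 0 < δ ∧ δ < 1 ∧
      (∃ π : BPolicy 2, IsBPolicy π ∧
        IsDP (fun r : Fin 3 → ℝ => viewProb π r) Adjacent ε δ ∧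
        ¬ IsDP (fun d : Fin 3 → Fin 2 → ℝ => tableProb π d) Adjacent ε δ) ∧
      {π : BPolicy 2 | IsBPolicy π ∧
          IsDP (fun d : Fin 3 → Fin 2 → ℝ => tableProb π d) Adjacent ε δ} ⊂
        {π : BPolicy 2 | IsBPolicy π ∧
          IsDP (fun r : Fin 3 → ℝ => viewProb π r) Adjacent ε δ} := by
  have hπ := isBPolicy_secondStepPolicy armOneProb_mem_Icc
  have hview := isDP_viewProb_secondStepPolicy_armOneProb
  have htable := not_isDP_tableProb_secondStepPolicy_armOneProb
  refine ⟨0, 17 / 100, le_rfl, by norm_num, by norm_num, ⟨_, hπ, hview, htable⟩, ?_⟩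
  refine (Set.ssubset_iff_of_subset fun π h => ?_).2 ⟨_, ⟨hπ, hview⟩, fun h => htable h.2⟩
  exact ⟨h.1, h.2.viewProb_of_tableProb⟩
end

section
/- A bandit policy π satisfies ρ-Interactive zCDP if and only if, for every deterministic adversary B = (B_t)_{t=1}^T, the post-processed policy π^B is ρ-Table zCDP (i.e. the Table mechanism M^{π^B} is ρ-zCDP), where π^B = (π^B_t)_{t=1}^T is defined by π^B_t(a | a_1, r_1, …, a_{t−1}, r_{t−1}) = π_t(a | B_1(a_1), r_1, B_2(a_1, a_2), r_2, …, B_{t−1}(a_1, …, a_{t−1}), r_{t−1}). -/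
/-!
Both conditions are equivalent to zCDP of the policy fed a fixed sequence of (query, reward)
pairs, independent of what it plays. A constant adversary on a table with constant rows realises
any such sequence in either mechanism. Conversely, in either mechanism the pair shown after step
`t` depends only on the outputs up to step `t`, and the Rényi sum
`∑ₒ ∏ₜ πₜ(oₜ | h)^α πₜ(oₜ | h')^(1-α)` does not decrease when the outputs, in order, are frozen one
at a time to a value maximising the sum of the remaining factors. Freezing all of them leaves a
fixed pair of sequences that differ in at most one reward.
-/

open scoped BigOperators

/-- A deterministic adversary: given the sequence of actions output by the policy so
far, it returns a query action. (`B` applied to `(o_1, …, o_t)` is `B_t(o_1, …, o_t)`.) -/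
abbrev Adversary (K : ℕ) := List (Fin K) → Fin K

/-- The query chosen by the adversary `B` at step `t`, namely `q_t = B_t(o_1, …, o_t)`,
as a function of the full sequence of outputs `o`. -/
def queryOf {K T : ℕ} (B : Adversary K) (o : Fin T → Fin K) (t : Fin T) : Fin K :=
  B (List.ofFn fun s : Fin (t.val + 1) =>
      o ⟨s.val, lt_of_le_of_lt (Nat.lt_succ_iff.mp s.isLt) t.isLt⟩)

/-- The view of the adversary `B` when the policy `π` interacts with the table of
rewards `d`: the probability that the sequence of outputs is `o`, namely
`∏_t π_t(o_t | q_1, x_{1,q_1}, …, q_{t-1}, x_{t-1,q_{t-1}})` with `q_s = B_s(o_1,…,o_s)`. -/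
noncomputable def advView {K T : ℕ} (B : Adversary K) (π : BPolicy K)
    (d : Fin T → Fin K → ℝ) (o : Fin T → Fin K) : ℝ :=
  ∏ t : Fin T,
    π t.val (histOf (queryOf B o) (fun s => d s (queryOf B o s)) t) (o t)

/-- `ρ`-Interactive zCDP: for every (deterministic) adversary `B`, every `α > 1` and
all neighbouring tables of rewards `d ∼ d'`,
`D_α(View_{B,π,d} ‖ View_{B,π,d'}) ≤ ρα`. -/
def InteractiveZCDP {K : ℕ} (T : ℕ) (ρ : ℝ) (π : BPolicy K) : Prop :=
  ∀ B : Adversary K, ∀ α : ℝ, 1 < α → ∀ d d' : Fin T → Fin K → ℝ, Adjacent d d' →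
    renyiDiv α (advView B π d) (advView B π d') ≤ ρ * α

/-- The post-processing `π^B` of the policy `π` by the deterministic adversary `B`:
`π^B_t(a | a_1, r_1, …, a_{t-1}, r_{t-1}) = π_t(a | B_1(a_1), r_1, B_2(a_1,a_2), r_2, …,
B_{t-1}(a_1,…,a_{t-1}), r_{t-1})`. -/
def advPolicy {K : ℕ} (B : Adversary K) (π : BPolicy K) : BPolicy K :=
  fun t h =>
    π t (List.ofFn fun i : Fin h.length =>
      (B ((h.map Prod.fst).take (i.val + 1)), (h.get i).2))

open Finset Function

section SumOverFunctions

variable {ι κ : Type*} [Fintype ι] [DecidableEq ι] [Fintype κ] (p : ι → Prop) [DecidablePred p]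

theorem sum_mul_sum_eq_card_mul_sum_mul {φ ψ : (ι → κ) → ℝ}
    (hφ : ∀ o o', (∀ i, p i → o i = o' i) → φ o = φ o')
    (hψ : ∀ o o', (∀ i, ¬ p i → o i = o' i) → ψ o = ψ o') :
    (∑ o, φ o) * (∑ o, ψ o) = Fintype.card (ι → κ) * ∑ o, φ o * ψ o := by
  -- exchanging the `¬ p`-coordinates of a pair `(o, o')` turns `φ o * ψ o'` into `φ o * ψ o`
  let swap : (ι → κ) × (ι → κ) → (ι → κ) × (ι → κ) := fun x =>
    (fun i => if p i then x.1 i else x.2 i, fun i => if p i then x.2 i else x.1 i)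
  have hswap : Involutive swap := fun x => by
    ext i <;> by_cases h : p i <;> simp [swap, h]
  calc (∑ o, φ o) * (∑ o, ψ o) = ∑ x : (ι → κ) × (ι → κ), φ x.1 * ψ x.2 := by
        rw [sum_mul_sum, ← Fintype.sum_prod_type']
    _ = ∑ x : (ι → κ) × (ι → κ), φ (swap x).1 * ψ (swap x).1 := by
        refine Fintype.sum_congr _ _ fun x => ?_
        rw [hφ x.1 (swap x).1 fun i hi => by simp [swap, hi],
          hψ x.2 (swap x).1 fun i hi => by simp [swap, hi]]
    _ = ∑ x : (ι → κ) × (ι → κ), φ x.1 * ψ x.1 :=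
        Equiv.sum_comp (hswap.toPerm swap) fun x => φ x.1 * ψ x.1
    _ = Fintype.card (ι → κ) * ∑ o, φ o * ψ o := by
        rw [Fintype.sum_prod_type]
        simp only [sum_const, card_univ, nsmul_eq_mul, ← mul_sum]

theorem exists_sum_mul_le_sum_mul_update [Nonempty κ] {i : ι} (hi : p i) {A B : (ι → κ) → ℝ}
    (hA₀ : ∀ o, 0 ≤ A o) (hA : ∀ o o', (∀ l, p l → o l = o' l) → A o = A o')
    (hB : ∀ k o o', (∀ l, ¬ p l → o l = o' l) → B (update o i k) = B (update o' i k)) :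
    ∃ k, ∑ o, A o * B o ≤ ∑ o, A o * B (update o i k) := by
  classical
  -- up to the factor `card (ι → κ)`, both sides are `∑ k, a k * b _`, since `A` and
  -- `B (update · i k)` depend on complementary sets of coordinates
  let a : κ → ℝ := fun k => ∑ o, if o i = k then A o else 0
  let b : κ → ℝ := fun k => ∑ o, B (update o i k)
  obtain ⟨k₀, -, hk₀⟩ := exists_max_image univ b univ_nonempty
  have hsplit : ∀ F : κ → (ι → κ) → ℝ,
      ∑ o, A o * F (o i) o = ∑ k, ∑ o, (if o i = k then A o else 0) * F k o := by
    intro F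
    rw [sum_comm]
    refine Fintype.sum_congr _ _ fun o => ?_
    simp only [ite_mul, zero_mul]
    rw [sum_ite_eq]
    simp
  have hfactor : ∀ k k', (Fintype.card (ι → κ) : ℝ) *
      ∑ o, (if o i = k then A o else 0) * B (update o i k') = a k * b k' := by
    intro k k'
    refine (sum_mul_sum_eq_card_mul_sum_mul p (fun o o' h => ?_) (hB k')).symm
    rw [h i hi, hA o o' h]
  have hcard : (0 : ℝ) < Fintype.card (ι → κ) := by exact_mod_cast Fintype.card_pos
  refine ⟨k₀, le_of_mul_le_mul_left ?_ hcard⟩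
  calc (Fintype.card (ι → κ) : ℝ) * ∑ o, A o * B o
      = ∑ k, a k * b k := by
        have h := hsplit fun k o => B (update o i k)
        simp only [update_eq_self] at h
        rw [h, mul_sum]
        exact sum_congr rfl fun k _ => hfactor k k
    _ ≤ ∑ k, a k * b k₀ := by
        gcongr with k
        · exact sum_nonneg fun o _ => by split_ifs <;> simp [hA₀]
        · exact hk₀ k (mem_univ k)
    _ = (Fintype.card (ι → κ) : ℝ) * ∑ o, A o * B (update o i k₀) := by
        have h := hsplit fun _ o => B (update o i k₀)
        beta_reduce at h
        rw [h, mul_sum]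
        exact sum_congr rfl fun k _ => (hfactor k k₀).symm

end SumOverFunctions

theorem rpow_mul_rpow_one_sub_self {p : ℝ} (hp : 0 ≤ p) (α : ℝ) : p ^ α * p ^ (1 - α) = p := by
  rw [← Real.rpow_add' hp (by norm_num), add_sub_cancel, Real.rpow_one]

theorem renyiDiv_self {Ω : Type*} [Fintype Ω] {p : Ω → ℝ} (hp : ∀ x, 0 ≤ p x)
    (h1 : ∑ x, p x = 1) (α : ℝ) : renyiDiv α p p = 0 := by
  simp [renyiDiv, rpow_mul_rpow_one_sub_self (hp _), h1]

theorem inv_mul_log_le_max_of_le {α a b : ℝ} (hα : 1 < α) (ha : 0 ≤ a) (hab : a ≤ b) :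
    (α - 1)⁻¹ * Real.log a ≤ max 0 ((α - 1)⁻¹ * Real.log b) := by
  have hα' : 0 ≤ (α - 1)⁻¹ := inv_nonneg.2 (by linarith)
  rcases ha.eq_or_lt with rfl | ha
  · simp
  · exact le_max_of_le_right (mul_le_mul_of_nonneg_left (Real.log_le_log ha hab) hα')

section Feedback

variable {K T : ℕ}

/-- The (query, reward) pair shown to the policy after step `t`, as a function of the whole
output sequence; adaptedness is imposed separately by `AdaptedFrom`. -/
abbrev Feedback (K T : ℕ) := Fin T → (Fin T → Fin K) → Fin K × ℝ

def feedbackHist (E : Feedback K T) (o : Fin T → Fin K) (t : Fin T) : List (Fin K × ℝ) :=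
  List.ofFn fun s : Fin t.val => E (t.embed s) o

noncomputable def feedbackProb (π : BPolicy K) (E : Feedback K T) (o : Fin T → Fin K) : ℝ :=
  ∏ t : Fin T, π t (feedbackHist E o t) (o t)

noncomputable def stepFactor (π : BPolicy K) (α : ℝ) (E E' : Feedback K T) (t : Fin T)
    (o : Fin T → Fin K) : ℝ :=
  π t (feedbackHist E o t) (o t) ^ α * π t (feedbackHist E' o t) (o t) ^ (1 - α)

noncomputable def renyiSum (π : BPolicy K) (α : ℝ) (E E' : Feedback K T) : ℝ :=
  ∑ o, ∏ t, stepFactor π α E E' t o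

def AdaptedFrom (m : ℕ) (E : Feedback K T) : Prop :=
  ∀ t o o', (∀ s : Fin T, m ≤ s.val → s ≤ t → o s = o' s) → E t o = E t o'

def freezeAt (E : Feedback K T) (i : Fin T) (k : Fin K) : Feedback K T :=
  fun t o => E t (update o i k)

theorem AdaptedFrom.feedbackHist_congr {m : ℕ} {E : Feedback K T} (hE : AdaptedFrom m E)
    {t : Fin T} {o o' : Fin T → Fin K} (h : ∀ s : Fin T, m ≤ s.val → s < t → o s = o' s) :
    feedbackHist E o t = feedbackHist E o' t :=
  congrArg List.ofFn <| funext fun s =>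
    hE _ o o' fun u hmu hus => h u hmu (lt_of_le_of_lt hus s.isLt)

theorem AdaptedFrom.freezeAt {m : ℕ} {E : Feedback K T} (hE : AdaptedFrom m E) (hm : m < T)
    (k : Fin K) : AdaptedFrom (m + 1) (freezeAt E ⟨m, hm⟩ k) := by
  intro t o o' h
  refine hE t _ _ fun s hms hst => ?_
  obtain rfl | hs := eq_or_ne s ⟨m, hm⟩
  · simp
  · have : m + 1 ≤ s.val := lt_of_le_of_ne hms fun h => hs (Fin.ext h.symm)
    simp [update_of_ne hs, h s this hst]

variable {π : BPolicy K} {α : ℝ}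

theorem stepFactor_nonneg (hπ : IsBPolicy π) {E E' : Feedback K T} {t : Fin T}
    {o : Fin T → Fin K} : 0 ≤ stepFactor π α E E' t o :=
  mul_nonneg (Real.rpow_nonneg ((hπ _ _).1 _) _) (Real.rpow_nonneg ((hπ _ _).1 _) _)

theorem renyiSum_nonneg (hπ : IsBPolicy π) (E E' : Feedback K T) : 0 ≤ renyiSum π α E E' :=
  sum_nonneg fun _ _ => prod_nonneg fun _ _ => stepFactor_nonneg hπ

theorem exists_renyiSum_le_freezeAt [NeZero K] {m : ℕ} (hm : m < T) {E E' : Feedback K T}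
    (hE : AdaptedFrom m E) (hE' : AdaptedFrom m E') (hπ : IsBPolicy π) :
    ∃ k, renyiSum π α E E' ≤
      renyiSum π α (freezeAt E ⟨m, hm⟩ k) (freezeAt E' ⟨m, hm⟩ k) := by
  classical
  set i : Fin T := ⟨m, hm⟩
  -- steps `t ≤ m` see a history that does not depend on the outputs at all
  have hpast : ∀ {F : Feedback K T}, AdaptedFrom m F → ∀ t : Fin T, t.val ≤ m →
      ∀ o o', feedbackHist F o t = feedbackHist F o' t := fun hF t ht o o' =>
    hF.feedbackHist_congr fun s hms hst =>
      absurd (lt_of_lt_of_le (Fin.lt_def.1 hst) ht) hms.not_gt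
  have hsplit : ∀ F F' : Feedback K T, renyiSum π α F F' = ∑ o,
      (∏ t with t.val ≤ m, stepFactor π α F F' t o) *
        ∏ t with ¬ t.val ≤ m, stepFactor π α F F' t o := fun F F' =>
    Fintype.sum_congr _ _ fun o => (prod_filter_mul_prod_filter_not _ _ _).symm
  obtain ⟨k, hk⟩ := exists_sum_mul_le_sum_mul_update (fun t : Fin T => t.val ≤ m)
    (i := i) le_rfl (A := fun o => ∏ t with t.val ≤ m, stepFactor π α E E' t o)
    (B := fun o => ∏ t with ¬ t.val ≤ m, stepFactor π α E E' t o)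
    (fun o => prod_nonneg fun t _ => stepFactor_nonneg hπ)
    (fun o o' h => prod_congr rfl fun t ht => by
      have ht : t.val ≤ m := (mem_filter.1 ht).2
      simp only [stepFactor, hpast hE t ht o o', hpast hE' t ht o o', h t ht])
    (fun k o o' h => prod_congr rfl fun t ht => by
      have ht : m < t.val := not_le.1 (mem_filter.1 ht).2
      have hti : t ≠ i := fun h => (h ▸ ht).false
      have hfuture : ∀ {F : Feedback K T}, AdaptedFrom m F →
          feedbackHist F (update o i k) t = feedbackHist F (update o' i k) t := fun hF =>
        (hF.freezeAt hm k).feedbackHist_congr fun s hs _ => h s (by omega)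
      simp only [stepFactor, update_of_ne hti, h t (not_le.2 ht), hfuture hE, hfuture hE'])
  refine ⟨k, ?_⟩
  rw [hsplit, hsplit]
  refine hk.trans_eq (Fintype.sum_congr _ _ fun o => ?_)
  congr 1
  · refine prod_congr rfl fun t ht => ?_
    have ht : t.val ≤ m := (mem_filter.1 ht).2
    simp only [stepFactor]
    rw [hpast hE t ht o (update o i k), hpast hE' t ht o (update o i k)]
    rfl
  · refine prod_congr rfl fun t ht => ?_
    have hti : t ≠ i := fun h => (mem_filter.1 ht).2 (h ▸ le_rfl)
    simp only [stepFactor, update_of_ne hti]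
    rfl

theorem exists_renyiSum_le_frozen [NeZero K] {m : ℕ} {E E' : Feedback K T}
    (hE : AdaptedFrom m E) (hE' : AdaptedFrom m E') (hπ : IsBPolicy π) :
    ∃ o₀ : Fin T → Fin K,
      renyiSum π α E E' ≤ renyiSum π α (fun t _ => E t o₀) (fun t _ => E' t o₀) := by
  obtain ⟨n, hn⟩ : ∃ n, T - m = n := ⟨_, rfl⟩
  induction n generalizing m E E' with
  | zero =>
    have hconst : ∀ {F : Feedback K T}, AdaptedFrom m F → (fun t _ => F t 0) = F :=
      fun hF => funext₂ fun t o => hF t 0 o fun s hms _ => absurd s.isLt (by omega)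
    exact ⟨0, by rw [hconst hE, hconst hE']⟩
  | succ n ih =>
    have hm : m < T := by omega
    obtain ⟨k, hk⟩ := exists_renyiSum_le_freezeAt hm hE hE' hπ
    obtain ⟨o₁, ho₁⟩ := ih (hE.freezeAt hm k) (hE'.freezeAt hm k) (by omega)
    exact ⟨update o₁ ⟨m, hm⟩ k, hk.trans ho₁⟩

theorem renyiDiv_feedbackProb (hπ : IsBPolicy π) (E E' : Feedback K T) :
    renyiDiv α (feedbackProb π E) (feedbackProb π E') =
      (α - 1)⁻¹ * Real.log (renyiSum π α E E') := by
  unfold renyiDiv renyiSum feedbackProb stepFactor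
  simp only [prod_mul_distrib, Real.finsetProd_rpow _ _ fun t _ => (hπ _ _).1 _]

theorem feedbackProb_nonneg (hπ : IsBPolicy π) (E : Feedback K T) (o : Fin T → Fin K) :
    0 ≤ feedbackProb π E o :=
  prod_nonneg fun _ _ => (hπ _ _).1 _

theorem sum_feedbackProb_const (hπ : IsBPolicy π) (H : Fin T → Fin K × ℝ) :
    ∑ o, feedbackProb π (fun t _ => H t) o = 1 := by
  classical
  simp only [feedbackProb, feedbackHist]
  rw [← Fintype.prod_sum fun (t : Fin T) a =>
    π t (List.ofFn fun s : Fin t.val => H (t.embed s)) a]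
  exact prod_eq_one fun t _ => (hπ _ _).2

variable (T) in
def FixedFeedbackZCDP (ρ : ℝ) (π : BPolicy K) : Prop :=
  IsZCDP (fun H : Fin T → Fin K × ℝ => feedbackProb π fun t _ => H t)
    (fun H H' => Adjacent H H' ∧ ∀ t, (H t).1 = (H' t).1) ρ

theorem FixedFeedbackZCDP.nonneg {ρ : ℝ} (h : FixedFeedbackZCDP T ρ π) (hπ : IsBPolicy π)
    [NeZero K] (hT : 0 < T) : 0 ≤ ρ := by
  -- the reward of the last row is never shown to the policy
  let last : Fin T := ⟨T - 1, by omega⟩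
  let H : Fin T → Fin K × ℝ := fun _ => (0, 0)
  let H' := update H last (0, 1)
  have hsame : (feedbackProb π fun t _ => H' t) = feedbackProb π fun t _ => H t := by
    refine funext fun o => prod_congr rfl fun t _ => congrArg (π t · (o t)) ?_
    refine congrArg List.ofFn (funext fun s => update_of_ne (Fin.ne_of_val_ne ?_) _ _)
    have := s.isLt; have := t.isLt; simp only [Fin.embed, last]; omega
  have hadj : Adjacent H H' ∧ ∀ t, (H t).1 = (H' t).1 := by
    refine ⟨⟨last, by simp [H', H], fun t ht => (update_of_ne ht _ _).symm⟩, fun t => ?_⟩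
    by_cases ht : t = last <;> simp [H', H, ht]
  have h2 : renyiDiv 2 (feedbackProb π fun t _ => H t) (feedbackProb π fun t _ => H' t) ≤ ρ * 2 :=
    h 2 one_lt_two H H' hadj
  rw [hsame, renyiDiv_self (feedbackProb_nonneg hπ _) (sum_feedbackProb_const hπ H)] at h2
  linarith

theorem FixedFeedbackZCDP.renyiDiv_le {ρ : ℝ} (h : FixedFeedbackZCDP T ρ π) (hπ : IsBPolicy π)
    [NeZero K] (hα : 1 < α) {E E' : Feedback K T} (hE : AdaptedFrom 0 E)
    (hE' : AdaptedFrom 0 E') (hact : ∀ t o, (E t o).1 = (E' t o).1) {j : Fin T}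
    (hoff : ∀ t o, t ≠ j → E t o = E' t o) :
    renyiDiv α (feedbackProb π E) (feedbackProb π E') ≤ ρ * α := by
  have hρα : 0 ≤ ρ * α := mul_nonneg (h.nonneg hπ j.pos) (by linarith)
  obtain ⟨o₀, hle⟩ := exists_renyiSum_le_frozen (α := α) hE hE' hπ
  have hfrozen : renyiDiv α (feedbackProb π fun t _ => E t o₀)
      (feedbackProb π fun t _ => E' t o₀) ≤ ρ * α := by
    by_cases hHH : ∀ t, E t o₀ = E' t o₀
    · simp only [hHH]
      rw [renyiDiv_self (feedbackProb_nonneg hπ _) (sum_feedbackProb_const hπ _)]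
      exact hρα
    · obtain ⟨t, ht⟩ := not_forall.1 hHH
      obtain rfl : t = j := by_contra (ht ∘ hoff t o₀)
      exact h α hα _ _ ⟨⟨t, ht, fun s hs => hoff s o₀ hs⟩, fun s => hact s o₀⟩
  rw [renyiDiv_feedbackProb hπ] at hfrozen ⊢
  exact (inv_mul_log_le_max_of_le hα (renyiSum_nonneg hπ E E') hle).trans (max_le hρα hfrozen)

def viewFeedback (B : Adversary K) (d : Fin T → Fin K → ℝ) : Feedback K T :=
  fun t o => (queryOf B o t, d t (queryOf B o t))

def tableFeedback (B : Adversary K) (d : Fin T → Fin K → ℝ) : Feedback K T :=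
  fun t o => (queryOf B o t, d t (o t))

theorem advView_eq_feedbackProb (B : Adversary K) (d : Fin T → Fin K → ℝ) :
    advView B π d = feedbackProb π (viewFeedback B d) := rfl

theorem advPolicy_histOf (B : Adversary K) (o : Fin T → Fin K) (r : Fin T → ℝ) (t : Fin T) :
    advPolicy B π t (histOf o r t) =
      π t (List.ofFn fun s : Fin t.val => (queryOf B o (t.embed s), r (t.embed s))) := by
  refine congrArg (π t) (List.ext_getElem (by simp [histOf]) fun i h₁ h₂ => ?_)
  have hi : i < t.val := by simpa [histOf] using h₁
  simp only [List.getElem_ofFn]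
  refine Prod.ext (congrArg B (List.ext_getElem (by simp [histOf, Fin.embed]; omega)
    fun n _ _ => ?_)) ?_
  · simp only [histOf, List.map_ofFn, List.getElem_take, List.getElem_ofFn]
    rfl
  · simp [histOf, List.get_eq_getElem, Fin.embed]

theorem tableProb_advPolicy (B : Adversary K) (d : Fin T → Fin K → ℝ) :
    tableProb (advPolicy B π) d = feedbackProb π (tableFeedback B d) := by
  funext o
  simp only [tableProb, viewProb, feedbackProb, advPolicy_histOf]
  rfl

theorem queryOf_congr (B : Adversary K) {o o' : Fin T → Fin K} {t : Fin T}
    (h : ∀ s ≤ t, o s = o' s) : queryOf B o t = queryOf B o' t :=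
  congrArg B <| congrArg List.ofFn <| funext fun s => h _ (Nat.lt_succ_iff.1 s.isLt)

theorem adaptedFrom_viewFeedback (B : Adversary K) (d : Fin T → Fin K → ℝ) :
    AdaptedFrom 0 (viewFeedback B d) := fun t o o' h => by
  have hq : queryOf B o t = queryOf B o' t := queryOf_congr B fun s hs => h s s.val.zero_le hs
  simp only [viewFeedback, hq]

theorem adaptedFrom_tableFeedback (B : Adversary K) (d : Fin T → Fin K → ℝ) :
    AdaptedFrom 0 (tableFeedback B d) := fun t o o' h => by
  have hq : queryOf B o t = queryOf B o' t := queryOf_congr B fun s hs => h s s.val.zero_le hs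
  simp only [tableFeedback, hq, h t t.val.zero_le le_rfl]

-- `queryOf` hands the adversary the outputs `o 0, …, o t`, so it reads the step off the length.
def constAdversary [NeZero K] (a : Fin T → Fin K) : Adversary K :=
  fun l => if h : l.length - 1 < T then a ⟨l.length - 1, h⟩ else 0

theorem queryOf_constAdversary [NeZero K] (a : Fin T → Fin K) (o : Fin T → Fin K) (t : Fin T) :
    queryOf (constAdversary a) o t = a t := by
  simp [queryOf, constAdversary]

theorem viewFeedback_constAdversary [NeZero K] {a : Fin T → Fin K} {H : Fin T → Fin K × ℝ}
    (ha : ∀ t, a t = (H t).1) :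
    viewFeedback (constAdversary a) (fun t _ => (H t).2) = fun t _ => H t := by
  funext t o
  simp [viewFeedback, queryOf_constAdversary, ha]

theorem tableFeedback_constAdversary [NeZero K] {a : Fin T → Fin K} {H : Fin T → Fin K × ℝ}
    (ha : ∀ t, a t = (H t).1) :
    tableFeedback (constAdversary a) (fun t _ => (H t).2) = fun t _ => H t := by
  funext t o
  simp [tableFeedback, queryOf_constAdversary, ha]

theorem adjacent_rewardTable [NeZero K] {H H' : Fin T → Fin K × ℝ}
    (h : Adjacent H H' ∧ ∀ t, (H t).1 = (H' t).1) :
    Adjacent (fun t (_ : Fin K) => (H t).2) (fun t _ => (H' t).2) := by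
  obtain ⟨⟨j, hj, hoff⟩, hact⟩ := h
  exact ⟨j, fun hrow => hj (Prod.ext (hact j) (congrFun hrow 0)), fun t ht => by
    simp only [hoff t ht]⟩

theorem InteractiveZCDP.fixedFeedbackZCDP [NeZero K] {ρ : ℝ} (h : InteractiveZCDP T ρ π) :
    FixedFeedbackZCDP T ρ π := fun α hα H H' hHH' => by
  have := h (constAdversary fun t => (H t).1) α hα _ _ (adjacent_rewardTable hHH')
  beta_reduce at this ⊢
  rwa [advView_eq_feedbackProb, advView_eq_feedbackProb, viewFeedback_constAdversary fun _ => rfl,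
    viewFeedback_constAdversary hHH'.2] at this

theorem fixedFeedbackZCDP_of_isZCDP_tableProb_advPolicy [NeZero K] {ρ : ℝ}
    (h : ∀ B : Adversary K, IsZCDP (fun d : Fin T → Fin K → ℝ => tableProb (advPolicy B π) d)
      Adjacent ρ) :
    FixedFeedbackZCDP T ρ π := fun α hα H H' hHH' => by
  have := h (constAdversary fun t => (H t).1) α hα _ _ (adjacent_rewardTable hHH')
  beta_reduce at this ⊢
  rwa [tableProb_advPolicy, tableProb_advPolicy, tableFeedback_constAdversary fun _ => rfl,
    tableFeedback_constAdversary hHH'.2] at this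

end Feedback

theorem interactive_zcdp_iff_table_zcdp_of_postprocessed {K T : ℕ} (π : BPolicy K)
    (hπ : IsBPolicy π) (ρ : ℝ) :
    InteractiveZCDP T ρ π ↔
      ∀ B : Adversary K,
        IsZCDP (fun d : Fin T → Fin K → ℝ => tableProb (advPolicy B π) d) Adjacent ρ := by
  have : NeZero K := ⟨by rintro rfl; simpa using (hπ 0 []).2⟩
  constructor
  · rintro h B α hα d d' ⟨j, -, hj⟩
    beta_reduce
    rw [tableProb_advPolicy, tableProb_advPolicy]
    exact h.fixedFeedbackZCDP.renyiDiv_le hπ hα (adaptedFrom_tableFeedback B d)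
      (adaptedFrom_tableFeedback B d') (fun _ _ => rfl) (j := j) fun t o ht => by
        simp [tableFeedback, hj t ht]
  · rintro h B α hα d d' ⟨j, -, hj⟩
    rw [advView_eq_feedbackProb, advView_eq_feedbackProb]
    exact (fixedFeedbackZCDP_of_isZCDP_tableProb_advPolicy h).renyiDiv_le hπ hα
      (adaptedFrom_viewFeedback B d) (adaptedFrom_viewFeedback B d') (fun _ _ => rfl)
      (j := j) fun t o ht => by simp [viewFeedback, hj t ht]
end

section
/- Let X_1, …, X_n be i.i.d. random variables taking values in [0,1] with E[X_i] = μ, let μ̂_n = (1/n)∑_{i=1}^n X_i, and let Z_n ∼ N(0, 1/(2ρn²)) be independent Gaussian noise. Then for every δ ∈ (0,1]: (i) P( μ̂_n + Z_n − √((1/(2n) + 1/(ρn²))·log(1/δ)) ≥ μ ) ≤ δ, and (ii) P( μ̂_n + Z_n + √((1/(2n) + 1/(ρn²))·log(1/δ)) ≤ μ ) ≤ δ. -/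
/-!
By Hoeffding's lemma each `X i - μ` is `1/4`-sub-Gaussian, so by independence the deviation
`μ̂_n - μ` of the empirical mean is `1/(4n)`-sub-Gaussian, while the centred Gaussian noise is
exactly `1/(2ρn²)`-sub-Gaussian. Parameters of independent sub-Gaussian variables add, so
`μ̂_n + Z_n - μ` is `c`-sub-Gaussian with `2c = 1/(2n) + 1/(ρn²)`, and the Chernoff bound
`exp (-ε² / (2c))` equals `δ` at `ε = √(2c log(1/δ))`. The lower tail is the same bound for the
negated variable.
-/

open MeasureTheory ProbabilityTheory Real
open scoped NNReal

namespace ProbabilityTheory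

variable {Ω : Type*} [MeasurableSpace Ω] {P : Measure Ω}

lemma hasSubgaussianMGF_of_map_eq_gaussianReal [NeZero P] {Z : Ω → ℝ} {v : ℝ≥0}
    (hZ : P.map Z = gaussianReal 0 v) : HasSubgaussianMGF Z v P where
  integrable_exp_mul t := by
    rw [← mgf_pos_iff, mgf_gaussianReal hZ]
    exact exp_pos _
  mgf_le t := by simp [mgf_gaussianReal hZ]

lemma HasSubgaussianMGF.measure_ge_sqrt_two_mul_log_le [IsFiniteMeasure P] {Y : Ω → ℝ}
    {c : ℝ≥0} (h : HasSubgaussianMGF Y c P) (hc : c ≠ 0) {δ : ℝ} (hδ0 : 0 < δ) (hδ1 : δ ≤ 1) :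
    P {ω | √(2 * c * log (1 / δ)) ≤ Y ω} ≤ ENNReal.ofReal δ := by
  have hlog : 0 ≤ log (1 / δ) := log_nonneg (one_le_one_div hδ0 hδ1)
  have hexp : exp (-√(2 * c * log (1 / δ)) ^ 2 / (2 * c)) = δ := by
    rw [sq_sqrt (by positivity), neg_div, mul_div_cancel_left₀ _ (by positivity),
      one_div, log_inv, neg_neg, exp_log hδ0]
  calc P {ω | √(2 * c * log (1 / δ)) ≤ Y ω}
      = ENNReal.ofReal (P.real {ω | √(2 * c * log (1 / δ)) ≤ Y ω}) := (ofReal_measureReal).symm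
    _ ≤ ENNReal.ofReal (exp (-√(2 * c * log (1 / δ)) ^ 2 / (2 * c))) :=
      ENNReal.ofReal_le_ofReal (h.measure_ge_le (sqrt_nonneg _))
    _ = ENNReal.ofReal δ := by rw [hexp]

lemma hasSubgaussianMGF_sum_div_card_sub_of_mem_Icc [IsProbabilityMeasure P] {ι : Type*}
    [Fintype ι] [Nonempty ι] {X : ι → Ω → ℝ} (hmeas : ∀ i, AEMeasurable (X i) P)
    (hindep : iIndepFun X P) {a b μ : ℝ} (hrange : ∀ i, ∀ᵐ ω ∂P, X i ω ∈ Set.Icc a b)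
    (hmean : ∀ i, P[X i] = μ) :
    HasSubgaussianMGF (fun ω ↦ (∑ i, X i ω) / Fintype.card ι - μ)
      ((‖b - a‖₊ / 2) ^ 2 / Fintype.card ι) P := by
  have hcentered : iIndepFun (fun i ω ↦ X i ω - μ) P :=
    hindep.comp (fun _ x ↦ x - μ) fun _ ↦ measurable_sub_const μ
  have hhoeffding : ∀ i ∈ Finset.univ,
      HasSubgaussianMGF (fun ω ↦ X i ω - μ) ((‖b - a‖₊ / 2) ^ 2) P :=
    fun i _ ↦ hmean i ▸ hasSubgaussianMGF_of_mem_Icc (hmeas i) (hrange i)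
  have hsum := (HasSubgaussianMGF.sum_of_iIndepFun hcentered hhoeffding).const_mul
    (Fintype.card ι : ℝ)⁻¹
  have hcard : (Fintype.card ι : ℝ) ≠ 0 := by positivity
  convert hsum using 1
  · ext ω
    rw [Finset.sum_sub_distrib, Finset.sum_const, Finset.card_univ, nsmul_eq_mul]
    field_simp
  · apply NNReal.eq
    -- `const_mul` states its factor as a bare subtype `⟨r ^ 2, _⟩`, which no `ℝ≥0` simp lemma sees.
    change _ = (Fintype.card ι : ℝ)⁻¹ ^ 2 * ((∑ _i : ι, (‖b - a‖₊ / 2) ^ 2 : ℝ≥0) : ℝ)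
    simp only [NNReal.coe_div, NNReal.coe_pow, coe_nnnorm, norm_eq_abs, NNReal.coe_ofNat,
      NNReal.coe_natCast, inv_pow, Finset.sum_const, Finset.card_univ, nsmul_eq_mul,
      NNReal.coe_mul]
    field_simp

end ProbabilityTheory

theorem private_empirical_mean_concentration_general
    {Ω : Type*} [MeasurableSpace Ω] (P : Measure Ω) [IsProbabilityMeasure P]
    (n : ℕ) (hn : 0 < n) (ρ : ℝ) (hρ : 0 < ρ) (μ : ℝ)
    (X : Fin n → Ω → ℝ) (Z : Ω → ℝ)
    (hXmeas : ∀ i, Measurable (X i))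
    (hindep : iIndepFun X P)
    (hrange : ∀ i, ∀ᵐ ω ∂P, X i ω ∈ Set.Icc (0 : ℝ) 1)
    (hmean : ∀ i, ∫ ω, X i ω ∂P = μ)
    (hZlaw : P.map Z = gaussianReal 0 (Real.toNNReal (1 / (2 * ρ * (n : ℝ) ^ 2))))
    (hZindep : IndepFun (fun ω (i : Fin n) => X i ω) Z P)
    (δ : ℝ) (hδ : δ ∈ Set.Ioc (0 : ℝ) 1) :
    P {ω | μ ≤ (∑ i, X i ω) / n + Z ω -
          Real.sqrt ((1 / (2 * n) + 1 / (ρ * (n : ℝ) ^ 2)) * Real.log (1 / δ))} ≤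
        ENNReal.ofReal δ ∧
      P {ω | (∑ i, X i ω) / n + Z ω +
            Real.sqrt ((1 / (2 * n) + 1 / (ρ * (n : ℝ) ^ 2)) * Real.log (1 / δ)) ≤ μ} ≤
        ENNReal.ofReal δ := by
  have : Nonempty (Fin n) := ⟨⟨0, hn⟩⟩
  have hdev := hasSubgaussianMGF_sum_div_card_sub_of_mem_Icc (fun i ↦ (hXmeas i).aemeasurable)
    hindep hrange hmean
  rw [Fintype.card_fin] at hdev
  have hY := hdev.add_of_indepFun (hasSubgaussianMGF_of_map_eq_gaussianReal hZlaw)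
    (hZindep.comp (by fun_prop : Measurable fun x : Fin n → ℝ ↦ (∑ i, x i) / n - μ)
      measurable_id)
  set c : ℝ≥0 := (‖(1 : ℝ) - 0‖₊ / 2) ^ 2 / n + (1 / (2 * ρ * (n : ℝ) ^ 2)).toNNReal
  have hc : 2 * (c : ℝ) = 1 / (2 * n) + 1 / (ρ * (n : ℝ) ^ 2) := by
    have hv : ((1 / (2 * ρ * (n : ℝ) ^ 2)).toNNReal : ℝ) = 1 / (2 * ρ * (n : ℝ) ^ 2) :=
      coe_toNNReal _ (by positivity)
    simp only [c, NNReal.coe_add, NNReal.coe_div, NNReal.coe_pow, coe_nnnorm, sub_zero,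
      norm_one, NNReal.coe_ofNat, NNReal.coe_natCast, hv]
    field_simp
  have hc0 : c ≠ 0 := by
    have : (0 : ℝ) < 2 * c := hc ▸ by positivity
    exact_mod_cast (pos_of_mul_pos_right this zero_le_two).ne'
  rw [← hc]
  constructor
  · convert hY.measure_ge_sqrt_two_mul_log_le hc0 hδ.1 hδ.2 using 2
    ext ω
    simp only [Set.mem_ofPred_eq]
    constructor <;> intro h <;> linarith
  · convert hY.neg.measure_ge_sqrt_two_mul_log_le hc0 hδ.1 hδ.2 using 2
    ext ω
    simp only [Set.mem_ofPred_eq, Pi.neg_apply]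
    constructor <;> intro h <;> linarith

theorem private_empirical_mean_concentration
    {Ω : Type*} [MeasurableSpace Ω] (P : Measure Ω) [IsProbabilityMeasure P]
    (n : ℕ) (hn : 0 < n) (ρ : ℝ) (hρ : 0 < ρ) (μ : ℝ)
    (X : Fin n → Ω → ℝ) (Z : Ω → ℝ)
    (hXmeas : ∀ i, Measurable (X i)) (hZmeas : Measurable Z)
    (hindep : iIndepFun X P)
    (hident : ∀ i j, IdentDistrib (X i) (X j) P P)
    (hrange : ∀ i, ∀ᵐ ω ∂P, X i ω ∈ Set.Icc (0 : ℝ) 1)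
    (hmean : ∀ i, ∫ ω, X i ω ∂P = μ)
    (hZlaw : P.map Z = gaussianReal 0 (Real.toNNReal (1 / (2 * ρ * (n : ℝ) ^ 2))))
    (hZindep : IndepFun (fun ω (i : Fin n) => X i ω) Z P)
    (δ : ℝ) (hδ : δ ∈ Set.Ioc (0 : ℝ) 1) :
    P {ω | μ ≤ (∑ i, X i ω) / n + Z ω -
          Real.sqrt ((1 / (2 * n) + 1 / (ρ * (n : ℝ) ^ 2)) * Real.log (1 / δ))} ≤
        ENNReal.ofReal δ ∧
      P {ω | (∑ i, X i ω) / n + Z ω +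
            Real.sqrt ((1 / (2 * n) + 1 / (ρ * (n : ℝ) ^ 2)) * Real.log (1 / δ)) ≤ μ} ≤
        ENNReal.ofReal δ :=
  private_empirical_mean_concentration_general P n hn ρ hρ μ X Z hXmeas hindep hrange hmean hZlaw
    hZindep δ hδ
end
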